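/- Let α = (α_n)_{n≥0} be a sequence of complex numbers. Then the following two sets of conditions are equivalent: (L₃): (S+1)(S−1)²α ∈ ℓ², (S−1)²α ∈ ℓ⁴, and α ∈ ℓ⁶; (L₄): (S+1)(S−1)²α ∈ ℓ², (S−1)α ∈ ℓ⁴, and α ∈ ℓ⁶. Moreover, if these conditions hold, then (S²−1)α ∈ ℓ³, i.e. ∑_{n≥0} |α_{n+2} − α_n|³ < ∞. -/

import Mathlib

/-!
Write `e = (S² - 1)α`, `d = (S + 1)(S - 1)²α` and `φ n = conj (e n) * ‖e n‖`, so that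
`‖e n‖³ = e n * φ n`. Summation by parts moves the difference `e n = α (n + 2) - α n` onto `φ`:
up to four boundary terms, bounded because `ℓ⁶ ⊆ ℓ^∞`, `∑ ‖e n‖³ = ∑ α (n + 2) (φ n - φ (n + 2))`,
and `‖φ n - φ (n + 2)‖ ≤ (‖e n‖ + ‖e (n + 2)‖)(‖d n‖ + ‖d (n + 1)‖)` since
`e (n + 2) - e n = d n + d (n + 1)`. Young's inequality with exponents `6, 3, 2` bounds each term
by `(‖e n‖³ + ‖e (n + 2)‖³) / 6` plus terms summable as `α ∈ ℓ⁶` and `d ∈ ℓ²`, so the partial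
sums of `‖e n‖³` are bounded. The equivalence then follows from
`(S - 1)²α = (S - 1)Sα - (S - 1)α` and `2 (S - 1)α = (S² - 1)α - (S - 1)²α`, using `ℓ³ ⊆ ℓ⁴`.
-/

open Finset ComplexConjugate
open scoped ENNReal

theorem memℓp_natCast_iff {ι : Type*} {E : Type*} [NormedAddCommGroup E] {f : ι → E} {k : ℕ}
    (hk : k ≠ 0) : Memℓp f k ↔ Summable fun i => ‖f i‖ ^ k := by
  rw [memℓp_gen_iff (by simpa [Nat.pos_iff_ne_zero] using hk)]
  simp [Real.rpow_natCast]

theorem memℓp_comp_add_nat_iff {E : Type*} [NormedAddCommGroup E] {f : ℕ → E} {p : ℝ≥0∞}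
    (hp : 0 < p.toReal) (k : ℕ) : Memℓp (fun n => f (n + k)) p ↔ Memℓp f p := by
  simp only [memℓp_gen_iff hp]
  exact summable_nat_add_iff (f := fun n => ‖f n‖ ^ p.toReal) k

theorem sum_range_comp_add_le_tsum {f : ℕ → ℝ} (hf : ∀ n, 0 ≤ f n) (h : Summable f) (k N : ℕ) :
    ∑ n ∈ range N, f (n + k) ≤ ∑' n, f n := by
  simpa using h.sum_le_tsum ((range N).map (addRightEmbedding k)) fun n _ => hf n

theorem sum_range_comp_add_two_le {f : ℕ → ℝ} (hf : ∀ n, 0 ≤ f n) (N : ℕ) :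
    ∑ n ∈ range N, f (n + 2) ≤ ∑ n ∈ range N, f n + (f N + f (N + 1)) := by
  have h := sum_range_succ' f (N + 1)
  rw [sum_range_succ' (fun n => f (n + 1)), sum_range_succ, sum_range_succ] at h
  linarith [hf 0, hf 1]

theorem sum_range_sub_two_mul_eq {R : Type*} [CommRing R] (a b : ℕ → R) (N : ℕ) :
    ∑ n ∈ range N, (a (n + 2) - a n) * b n =
      ∑ n ∈ range N, a (n + 2) * (b n - b (n + 2)) + (a N * b N + a (N + 1) * b (N + 1))
        - (a 0 * b 0 + a 1 * b 1) := by
  induction N with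
  | zero => simp
  | succ N ih =>
    rw [sum_range_succ, sum_range_succ, ih]
    ring

theorem norm_sum_range_sub_two_mul_le {R : Type*} [SeminormedCommRing R] {a b : ℕ → R} {A B : ℝ}
    (ha : ∀ n, ‖a n‖ ≤ A) (hb : ∀ n, ‖b n‖ ≤ B) (N : ℕ) :
    ‖∑ n ∈ range N, (a (n + 2) - a n) * b n‖ ≤
      ∑ n ∈ range N, ‖a (n + 2)‖ * ‖b n - b (n + 2)‖ + 4 * (A * B) := by
  have hab (n : ℕ) : ‖a n * b n‖ ≤ A * B := (norm_mul_le _ _).trans <|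
    mul_le_mul (ha n) (hb n) (norm_nonneg _) ((norm_nonneg _).trans (ha 0))
  rw [sum_range_sub_two_mul_eq]
  grw [norm_sub_le, norm_add_le, norm_add_le, norm_add_le, norm_sum_le, hab, hab, hab, hab]
  linarith [sum_le_sum fun n (_ : n ∈ range N) => norm_mul_le (a (n + 2)) (b n - b (n + 2))]

variable {𝕜 : Type*} [RCLike 𝕜]

theorem mul_conj_mul_norm (x : 𝕜) : x * (conj x * ‖x‖) = ((‖x‖ ^ 3 : ℝ) : 𝕜) := by
  rw [← mul_assoc, RCLike.mul_conj]
  push_cast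
  ring

theorem norm_conj_mul_norm_sub_le (x y : 𝕜) :
    ‖conj x * ‖x‖ - conj y * ‖y‖‖ ≤ (‖x‖ + ‖y‖) * ‖x - y‖ := by
  have hsplit : conj x * ‖x‖ - conj y * ‖y‖ =
      conj (x - y) * ‖x‖ + conj y * ((‖x‖ - ‖y‖ : ℝ) : 𝕜) := by
    rw [map_sub]; push_cast; ring
  calc ‖conj x * ‖x‖ - conj y * ‖y‖‖
      ≤ ‖x - y‖ * ‖x‖ + ‖y‖ * |‖x‖ - ‖y‖| := by
        rw [hsplit]
        refine (norm_add_le _ _).trans_eq ?_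
        simp only [norm_mul, RCLike.norm_conj, RCLike.norm_ofReal, abs_norm]
    _ ≤ (‖x‖ + ‖y‖) * ‖x - y‖ := by
        nlinarith [abs_norm_sub_norm_le x y, norm_nonneg y]

theorem mul_mul_le_pow_three_add_pow_six_add_sq {x : ℝ} (hx : 0 ≤ x) (y z : ℝ) :
    y * (x * z) ≤ x ^ 3 / 24 + y ^ 6 / 6 + 2 * z ^ 2 := by
  nlinarith [sq_nonneg (x * y / 2 - 2 * z),
    mul_nonneg (sq_nonneg (x / 2 - y ^ 2)) (by positivity : (0:ℝ) ≤ x + y ^ 2)]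

theorem norm_mul_norm_conj_mul_norm_sub_le (a x y : 𝕜) :
    ‖a‖ * ‖conj x * ‖x‖ - conj y * ‖y‖‖ ≤
      (‖x‖ ^ 3 + ‖y‖ ^ 3) / 6 + ‖a‖ ^ 6 / 6 + 2 * ‖x - y‖ ^ 2 := by
  have hcube : (‖x‖ + ‖y‖) ^ 3 ≤ 4 * (‖x‖ ^ 3 + ‖y‖ ^ 3) :=
    (add_pow_le (norm_nonneg x) (norm_nonneg y) 3).trans_eq (by norm_num)
  calc ‖a‖ * ‖conj x * ‖x‖ - conj y * ‖y‖‖ ≤ ‖a‖ * ((‖x‖ + ‖y‖) * ‖x - y‖) := by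
        gcongr; exact norm_conj_mul_norm_sub_le x y
    _ ≤ (‖x‖ + ‖y‖) ^ 3 / 24 + ‖a‖ ^ 6 / 6 + 2 * ‖x - y‖ ^ 2 :=
        mul_mul_le_pow_three_add_pow_six_add_sq (by positivity) _ _
    _ ≤ _ := by linarith

theorem sum_range_norm_sub_two_pow_three_le {α : ℕ → 𝕜} {B : ℝ} (hαB : ∀ n, ‖α n‖ ≤ B) (N : ℕ) :
    ∑ n ∈ range N, ‖α (n + 2) - α n‖ ^ 3 ≤
      (∑ n ∈ range N, ‖α (n + 2)‖ ^ 6) / 4 +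
        6 * ∑ n ∈ range N, (‖α (n + 3) - α (n + 2) - α (n + 1) + α n‖ ^ 2 +
          ‖α (n + 4) - α (n + 3) - α (n + 2) + α (n + 1)‖ ^ 2) + 28 * B ^ 3 := by
  set d : ℕ → 𝕜 := fun n => α (n + 3) - α (n + 2) - α (n + 1) + α n
  set e : ℕ → 𝕜 := fun n => α (n + 2) - α n
  set φ : ℕ → 𝕜 := fun n => conj (e n) * ‖e n‖
  have heB (n : ℕ) : ‖e n‖ ≤ 2 * B := by
    linarith [norm_sub_le (α (n + 2)) (α n), hαB n, hαB (n + 2)]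
  have hφB (n : ℕ) : ‖φ n‖ ≤ (2 * B) ^ 2 := by
    simp only [φ, norm_mul, RCLike.norm_conj, RCLike.norm_ofReal, abs_norm, ← sq]
    exact pow_le_pow_left₀ (norm_nonneg _) (heB n) 2
  have hparts : ∑ n ∈ range N, ‖e n‖ ^ 3 ≤
      ∑ n ∈ range N, ‖α (n + 2)‖ * ‖φ n - φ (n + 2)‖ + 4 * (B * (2 * B) ^ 2) := by
    have hcubes : ∑ n ∈ range N, (α (n + 2) - α n) * φ n =
        ((∑ n ∈ range N, ‖e n‖ ^ 3 : ℝ) : 𝕜) := by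
      rw [RCLike.ofReal_sum]
      exact sum_congr rfl fun n _ => mul_conj_mul_norm (e n)
    have h := norm_sum_range_sub_two_mul_le hαB hφB N
    rwa [hcubes, RCLike.norm_ofReal, abs_of_nonneg (by positivity)] at h
  have hyoung (n : ℕ) : ‖α (n + 2)‖ * ‖φ n - φ (n + 2)‖ ≤
      (‖e n‖ ^ 3 + ‖e (n + 2)‖ ^ 3) / 6 + ‖α (n + 2)‖ ^ 6 / 6 +
        4 * (‖d n‖ ^ 2 + ‖d (n + 1)‖ ^ 2) := by
    have he_sub : ‖e n - e (n + 2)‖ ≤ ‖d n‖ + ‖d (n + 1)‖ := by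
      rw [← norm_neg]
      convert norm_add_le (d n) (d (n + 1)) using 2
      simp only [d, e]
      ring
    have := pow_le_pow_left₀ (norm_nonneg _) he_sub 2
    linarith [norm_mul_norm_conj_mul_norm_sub_le (α (n + 2)) (e n) (e (n + 2)),
      add_sq_le (a := ‖d n‖) (b := ‖d (n + 1)‖)]
  have hsum := sum_le_sum fun n (_ : n ∈ range N) => hyoung n
  simp only [sum_add_distrib, ← sum_div, ← mul_sum] at hsum
  have hshift := sum_range_comp_add_two_le (fun n => pow_nonneg (norm_nonneg (e n)) 3) N
  have := pow_le_pow_left₀ (norm_nonneg _) (heB N) 3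
  have := pow_le_pow_left₀ (norm_nonneg _) (heB (N + 1)) 3
  have := (norm_nonneg (α 0)).trans (hαB 0)
  show ∑ n ∈ range N, ‖e n‖ ^ 3 ≤ _
  rw [sum_add_distrib]
  linarith

theorem summable_norm_sub_two_pow_three {α : ℕ → 𝕜}
    (hd : Summable fun n => ‖α (n + 3) - α (n + 2) - α (n + 1) + α n‖ ^ 2)
    (ha : Summable fun n => ‖α n‖ ^ 6) :
    Summable fun n => ‖α (n + 2) - α n‖ ^ 3 := by
  obtain ⟨B, hB⟩ : BddAbove (Set.range fun n => ‖α n‖) :=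
    (((memℓp_natCast_iff (by norm_num)).mpr ha).of_exponent_ge le_top).bddAbove
  set T := ∑' n, ‖α n‖ ^ 6
  set D := ∑' n, ‖α (n + 3) - α (n + 2) - α (n + 1) + α n‖ ^ 2
  refine summable_of_sum_range_le (c := T / 4 + 12 * D + 28 * B ^ 3) (fun n => by positivity)
    fun N => ?_
  have hd_nonneg (n : ℕ) : 0 ≤ ‖α (n + 3) - α (n + 2) - α (n + 1) + α n‖ ^ 2 := by positivity
  have hpartial := sum_range_norm_sub_two_pow_three_le (fun n => hB ⟨n, rfl⟩) N
  rw [sum_add_distrib] at hpartial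
  linarith [sum_range_comp_add_le_tsum (fun n => pow_nonneg (norm_nonneg (α n)) 6) ha 2 N,
    hd.sum_le_tsum (range N) fun n _ => hd_nonneg n, sum_range_comp_add_le_tsum hd_nonneg hd 1 N]

theorem memℓp_second_diff_of_memℓp_diff {R : Type*} [NormedRing R] {α : ℕ → R} {p : ℝ≥0∞}
    (hp : 0 < p.toReal) (h : Memℓp (fun n => α (n + 1) - α n) p) :
    Memℓp (fun n => α (n + 2) - 2 * α (n + 1) + α n) p := by
  convert ((memℓp_comp_add_nat_iff hp 1).mpr h).sub h using 1
  funext n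
  simp only [Pi.sub_apply, two_mul]
  abel

theorem memℓp_diff_of_memℓp_second_diff {α : ℕ → 𝕜} {p : ℝ≥0∞}
    (he : Memℓp (fun n => α (n + 2) - α n) p)
    (h : Memℓp (fun n => α (n + 2) - 2 * α (n + 1) + α n) p) :
    Memℓp (fun n => α (n + 1) - α n) p := by
  convert (he.sub h).const_smul (2⁻¹ : 𝕜) using 1
  funext n
  simp only [Pi.smul_apply, Pi.sub_apply, smul_eq_mul]
  ring

theorem stmt5 (α : ℕ → ℂ) :
    ((Summable (fun n => ‖α (n + 3) - α (n + 2) - α (n + 1) + α n‖ ^ (2 : ℕ)) ∧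
        Summable (fun n => ‖α (n + 2) - 2 * α (n + 1) + α n‖ ^ (4 : ℕ)) ∧
        Summable (fun n => ‖α n‖ ^ (6 : ℕ))) ↔
      (Summable (fun n => ‖α (n + 3) - α (n + 2) - α (n + 1) + α n‖ ^ (2 : ℕ)) ∧
        Summable (fun n => ‖α (n + 1) - α n‖ ^ (4 : ℕ)) ∧
        Summable (fun n => ‖α n‖ ^ (6 : ℕ)))) ∧
    ((Summable (fun n => ‖α (n + 3) - α (n + 2) - α (n + 1) + α n‖ ^ (2 : ℕ)) ∧
        Summable (fun n => ‖α (n + 2) - 2 * α (n + 1) + α n‖ ^ (4 : ℕ)) ∧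
        Summable (fun n => ‖α n‖ ^ (6 : ℕ))) →
      Summable (fun n => ‖α (n + 2) - α n‖ ^ (3 : ℕ))) := by
  have hℓ4 {f : ℕ → ℂ} : Memℓp f (4 : ℕ) ↔ Summable fun n => ‖f n‖ ^ 4 :=
    memℓp_natCast_iff (by norm_num)
  refine ⟨⟨fun ⟨hd, hΔ₂, ha⟩ => ⟨hd, ?_, ha⟩, fun ⟨hd, hΔ, ha⟩ => ⟨hd, ?_, ha⟩⟩,
    fun ⟨hd, _, ha⟩ => summable_norm_sub_two_pow_three hd ha⟩
  · have he3 : Memℓp (fun n => α (n + 2) - α n) (3 : ℕ) :=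
      (memℓp_natCast_iff (by norm_num)).mpr (summable_norm_sub_two_pow_three hd ha)
    have he := he3.of_exponent_ge (p := (4 : ℕ)) (Nat.cast_le.mpr (by norm_num))
    exact hℓ4.mp (memℓp_diff_of_memℓp_second_diff he (hℓ4.mpr hΔ₂))
  · exact hℓ4.mp (memℓp_second_diff_of_memℓp_diff (by norm_num) (hℓ4.mpr hΔ))
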